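/- Let q be a polynomial of degree (n,m) with no zeros on the closed bidisk, q(0,0) > 0, and let μ be its Bernstein–Szegő probability measure with normalizing constant c. Then q/c is, up to a unimodular constant, the unique polynomial p of bidegree (n,m) satisfying: p ⊥_μ z^j w^k for all 0 ≤ j ≤ n, 0 ≤ k ≤ m with (j,k) ≠ (0,0), p(0,0) > 0, and ‖p‖_μ = 1; equivalently, the reproducing kernel of the one-dimensional μ-orthogonal complement of span{z^j w^k : (j,k) ≠ (0,0), 0 ≤ j ≤ n, 0 ≤ k ≤ m} inside the degree-(n,m) polynomials is (1/c^2) q(z,w) conj(q(ζ,ω)). -/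

import Mathlib

open ComplexConjugate

/-- Evaluation of a two-variable polynomial of bidegree at most `(n, m)`. -/
noncomputable def evalP (n m : ℕ) (a : ℕ → ℕ → ℂ) (z w : ℂ) : ℂ :=
  ∑ j ∈ Finset.range (n + 1), ∑ k ∈ Finset.range (m + 1), a j k * z ^ j * w ^ k

/-- Point on the unit circle. -/
noncomputable def tor (θ : ℝ) : ℂ := Complex.exp (θ * Complex.I)

/-- `p` (given by coefficients `b`) is `μ`-orthogonal to every monomial `z^j w^k` with
`0 ≤ j ≤ n`, `0 ≤ k ≤ m`, `(j,k) ≠ (0,0)`, where `μ` is the Bernstein–Szegő measure of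
`q` (given by coefficients `a`) with normalizing constant `c`. -/
def OrthCond (n m : ℕ) (a b : ℕ → ℕ → ℂ) (c : ℝ) : Prop :=
  ∀ j k : ℕ, j ≤ n → k ≤ m → (j, k) ≠ (0, 0) →
    (1 / (2 * Real.pi) ^ 2 : ℂ) *
      (∫ θ in (0 : ℝ)..(2 * Real.pi), ∫ φ in (0 : ℝ)..(2 * Real.pi),
        evalP n m b (tor θ) (tor φ) * conj ((tor θ) ^ j * (tor φ) ^ k) *
          ((c : ℂ) ^ 2 / (‖evalP n m a (tor θ) (tor φ)‖ : ℂ) ^ 2)) = 0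

/-- `p` (given by coefficients `b`) has unit norm in `L²(μ)`, where `μ` is the
Bernstein–Szegő measure of `q` with normalizing constant `c`. -/
def NormOneCond (n m : ℕ) (a b : ℕ → ℕ → ℂ) (c : ℝ) : Prop :=
  (1 / (2 * Real.pi) ^ 2) *
    (∫ θ in (0 : ℝ)..(2 * Real.pi), ∫ φ in (0 : ℝ)..(2 * Real.pi),
      ‖evalP n m b (tor θ) (tor φ)‖ ^ 2 *
        (c ^ 2 / ‖evalP n m a (tor θ) (tor φ)‖ ^ 2)) = 1

/-- `p(0,0)` is a positive real number. -/
def PosAtZero (n m : ℕ) (b : ℕ → ℕ → ℂ) : Prop :=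
  0 < (evalP n m b 0 0).re ∧ (evalP n m b 0 0).im = 0

/-!
Write `⟨f, g⟩ = ∫∫ f ḡ c²/|q|²` over the torus. For a monomial `m ≠ 1`,
`⟨q/c, m⟩ = c · conj (∫∫ m/q)`, and `m/q` is holomorphic on the closed bidisk, so by the mean
value property this is `(2π)² c · conj (m(0,0)/q(0,0)) = 0`.

Conversely, if `p` satisfies the orthogonality conditions, let `s = p - t q/c` with `t` chosen so
that `s(0,0) = 0`. Expanding `conj s` in monomials gives `⟨s, s⟩ = Σ conj(s_jk) ⟨s, z^j w^k⟩ = 0`,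
since the term `(0,0)` has coefficient `0` and all other monomials are orthogonal to `s`. The
weight is continuous and positive, so `s` vanishes on the torus, hence all its Fourier
coefficients, which are its coefficients, vanish. Finally `‖p‖ = |t|` and `p(0,0), q(0,0) > 0`
force `t = 1`.
-/

open Complex MeasureTheory Metric Set Finset
open scoped Real ComplexOrder

namespace BernsteinSzego

theorem continuous_tor : Continuous tor := by
  unfold tor; fun_prop

theorem norm_tor (θ : ℝ) : ‖tor θ‖ = 1 := by
  simp [tor, norm_exp]

theorem tor_mem_closedBall (θ : ℝ) : tor θ ∈ closedBall (0 : ℂ) 1 := by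
  simp [norm_tor]

theorem circleMap_zero_one (θ : ℝ) : circleMap 0 1 θ = tor θ := by
  simp [circleMap, tor]

section TorusIntegral

variable {E : Type*} [NormedAddCommGroup E] [NormedSpace ℝ E]

noncomputable def torusIntegral (F : ℝ → ℝ → E) : E :=
  ∫ θ in (0 : ℝ)..2 * π, ∫ φ in (0 : ℝ)..2 * π, F θ φ

theorem torusIntegral_congr {F G : ℝ → ℝ → E}
    (h : ∀ θ ∈ Icc 0 (2 * π), ∀ φ ∈ Icc 0 (2 * π), F θ φ = G θ φ) :
    torusIntegral F = torusIntegral G := by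
  unfold torusIntegral
  refine intervalIntegral.integral_congr fun θ hθ => intervalIntegral.integral_congr fun φ hφ => ?_
  rw [uIcc_of_le Real.two_pi_pos.le] at hθ hφ
  exact h θ hθ φ hφ

theorem intervalIntegrable_integral_of_continuous {F : ℝ → ℝ → E}
    (hF : Continuous fun p : ℝ × ℝ => F p.1 p.2) :
    IntervalIntegrable (fun θ => ∫ φ in (0 : ℝ)..2 * π, F θ φ) volume 0 (2 * π) :=
  (intervalIntegral.continuous_parametric_intervalIntegral_of_continuous' hF _ _)
    |>.intervalIntegrable _ _

theorem torusIntegral_finset_sum {ι : Type*} (s : Finset ι) {F : ι → ℝ → ℝ → E}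
    (hF : ∀ i ∈ s, Continuous fun p : ℝ × ℝ => F i p.1 p.2) :
    torusIntegral (fun θ φ => ∑ i ∈ s, F i θ φ) = ∑ i ∈ s, torusIntegral (F i) := by
  unfold torusIntegral
  rw [← intervalIntegral.integral_finsetSum fun i hi =>
    intervalIntegrable_integral_of_continuous (hF i hi)]
  refine intervalIntegral.integral_congr fun θ _ =>
    intervalIntegral.integral_finsetSum fun i hi => ?_
  exact ((hF i hi).uncurry_left θ).intervalIntegrable _ _

theorem torusIntegral_sub {F G : ℝ → ℝ → E} (hF : Continuous fun p : ℝ × ℝ => F p.1 p.2)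
    (hG : Continuous fun p : ℝ × ℝ => G p.1 p.2) :
    torusIntegral (fun θ φ => F θ φ - G θ φ) = torusIntegral F - torusIntegral G := by
  unfold torusIntegral
  rw [← intervalIntegral.integral_sub (intervalIntegrable_integral_of_continuous hF)
    (intervalIntegrable_integral_of_continuous hG)]
  exact intervalIntegral.integral_congr fun θ _ => intervalIntegral.integral_sub
    ((hF.uncurry_left θ).intervalIntegrable _ _) ((hG.uncurry_left θ).intervalIntegrable _ _)

theorem torusIntegral_const [CompleteSpace E] (x : E) :
    torusIntegral (fun _ _ => x) = (2 * π) ^ 2 • x := by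
  simp [torusIntegral, smul_smul, pow_two]

end TorusIntegral

theorem torusIntegral_const_mul (d : ℂ) (F : ℝ → ℝ → ℂ) :
    torusIntegral (fun θ φ => d * F θ φ) = d * torusIntegral F := by
  simp only [torusIntegral, intervalIntegral.integral_const_mul]

theorem torusIntegral_prod_mul (u v : ℝ → ℂ) :
    torusIntegral (fun θ φ => u θ * v φ) =
      (∫ θ in (0 : ℝ)..2 * π, u θ) * ∫ φ in (0 : ℝ)..2 * π, v φ := by
  simp only [torusIntegral, intervalIntegral.integral_const_mul,
    intervalIntegral.integral_mul_const]

theorem torusIntegral_conj (F : ℝ → ℝ → ℂ) :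
    torusIntegral (fun θ φ => conj (F θ φ)) = conj (torusIntegral F) := by
  simp only [torusIntegral, intervalIntegral.intervalIntegral_conj]

theorem torusIntegral_ofReal (F : ℝ → ℝ → ℝ) :
    torusIntegral (fun θ φ => (F θ φ : ℂ)) = torusIntegral F := by
  simp only [torusIntegral, intervalIntegral.integral_ofReal]

theorem eqOn_zero_of_integral_eq_zero {f : ℝ → ℝ} {a b : ℝ} (hab : a < b)
    (hf : ContinuousOn f (Icc a b)) (hf0 : ∀ x ∈ Icc a b, 0 ≤ f x)
    (hint : ∫ x in a..b, f x = 0) : EqOn f 0 (Icc a b) := by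
  intro x hx
  by_contra hne
  have hpos := intervalIntegral.integral_lt_integral_of_continuousOn_of_le_of_exists_lt hab
    continuousOn_const hf (fun y hy => hf0 y (Ioc_subset_Icc_self hy))
    ⟨x, hx, (hf0 x hx).lt_of_ne' hne⟩
  simp [hint] at hpos

theorem eq_zero_of_torusIntegral_eq_zero {F : ℝ → ℝ → ℝ}
    (hF : Continuous fun p : ℝ × ℝ => F p.1 p.2) (hF0 : ∀ θ φ, 0 ≤ F θ φ)
    (hint : torusIntegral F = 0) :
    ∀ θ ∈ Icc 0 (2 * π), ∀ φ ∈ Icc 0 (2 * π), F θ φ = 0 := by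
  have hinner : EqOn (fun θ => ∫ φ in (0 : ℝ)..2 * π, F θ φ) 0 (Icc 0 (2 * π)) :=
    eqOn_zero_of_integral_eq_zero Real.two_pi_pos
      (intervalIntegral.continuous_parametric_intervalIntegral_of_continuous' hF _ _).continuousOn
      (fun θ _ => intervalIntegral.integral_nonneg Real.two_pi_pos.le fun φ _ => hF0 θ φ) hint
  exact fun θ hθ => eqOn_zero_of_integral_eq_zero Real.two_pi_pos
    (hF.uncurry_left θ).continuousOn (fun φ _ => hF0 θ φ) (hinner hθ)

theorem integral_tor_of_differentiableOn {f : ℂ → ℂ}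
    (hf : DifferentiableOn ℂ f (closedBall 0 1)) :
    ∫ θ in (0 : ℝ)..2 * π, f (tor θ) = 2 * π * f 0 := by
  have hmean : Real.circleAverage f 0 1 = f 0 := by
    refine DiffContOnCl.circleAverage ?_
    rw [abs_one]
    exact hf.diffContOnCl_ball subset_rfl
  rw [Real.circleAverage_def] at hmean
  simp only [circleMap_zero_one] at hmean
  rw [← hmean, real_smul]
  push_cast
  field_simp

theorem torusIntegral_of_differentiableOn {F : ℂ → ℂ → ℂ}
    (hF : ∀ z ∈ closedBall (0 : ℂ) 1, DifferentiableOn ℂ (F z) (closedBall 0 1))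
    (hF0 : DifferentiableOn ℂ (fun z => F z 0) (closedBall 0 1)) :
    torusIntegral (fun θ φ => F (tor θ) (tor φ)) = (2 * π) ^ 2 * F 0 0 := by
  unfold torusIntegral
  simp only [integral_tor_of_differentiableOn (hF _ (tor_mem_closedBall _))]
  rw [intervalIntegral.integral_const_mul, integral_tor_of_differentiableOn hF0]
  ring

theorem tor_pow_mul_conj_tor_pow (j k : ℕ) (θ : ℝ) :
    tor θ ^ j * conj (tor θ ^ k) = exp (((j : ℂ) - k) * I * θ) := by
  simp only [tor, ← exp_nat_mul, ← exp_conj, ← exp_add, map_mul, conj_ofReal, conj_I,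
    map_natCast]
  ring_nf

theorem integral_tor_pow_mul_conj_tor_pow (j k : ℕ) :
    ∫ θ in (0 : ℝ)..2 * π, tor θ ^ j * conj (tor θ ^ k) =
      if j = k then (2 * π : ℂ) else 0 := by
  simp only [tor_pow_mul_conj_tor_pow]
  split_ifs with h
  · simp [h]
  · have hjk : ((j : ℂ) - k) * I ≠ 0 :=
      mul_ne_zero (sub_ne_zero.2 (by exact_mod_cast h)) I_ne_zero
    have hperiod : ((j : ℂ) - k) * I * ↑(2 * π) = ((j - k : ℤ) : ℂ) * (2 * π * I) := by
      push_cast; ring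
    rw [integral_exp_mul_complex hjk, hperiod, exp_int_mul_two_pi_mul_I]
    simp

section Polynomial

variable (n m : ℕ)

theorem evalP_zero_zero (b : ℕ → ℕ → ℂ) : evalP n m b 0 0 = b 0 0 := by
  simp [evalP, Finset.sum_range_succ']

theorem evalP_div (b : ℕ → ℕ → ℂ) (d z w : ℂ) :
    evalP n m (fun j k => b j k / d) z w = evalP n m b z w / d := by
  simp only [evalP, sum_div, div_mul_eq_mul_div]

theorem evalP_sub_mul (b p : ℕ → ℕ → ℂ) (t z w : ℂ) :
    evalP n m (fun j k => b j k - t * p j k) z w = evalP n m b z w - t * evalP n m p z w := by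
  simp only [evalP, mul_sum, ← sum_sub_distrib]
  exact sum_congr rfl fun _ _ => sum_congr rfl fun _ _ => by ring

theorem conj_evalP (b : ℕ → ℕ → ℂ) (z w : ℂ) :
    conj (evalP n m b z w) =
      ∑ j ∈ range (n + 1), ∑ k ∈ range (m + 1), conj (b j k) * conj (z ^ j * w ^ k) := by
  simp only [evalP, map_sum, map_mul]
  exact sum_congr rfl fun _ _ => sum_congr rfl fun _ _ => by ring

theorem continuous_evalP_tor (b : ℕ → ℕ → ℂ) :
    Continuous fun p : ℝ × ℝ => evalP n m b (tor p.1) (tor p.2) := by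
  have := continuous_tor
  unfold evalP; fun_prop

theorem differentiable_evalP_left (b : ℕ → ℕ → ℂ) (w : ℂ) :
    Differentiable ℂ fun z => evalP n m b z w := by
  unfold evalP; fun_prop

theorem differentiable_evalP_right (b : ℕ → ℕ → ℂ) (z : ℂ) :
    Differentiable ℂ (evalP n m b z) := by
  unfold evalP; fun_prop

theorem torusIntegral_evalP_mul_conj_monomial (b : ℕ → ℕ → ℂ) {j k : ℕ} (hj : j ≤ n)
    (hk : k ≤ m) :
    torusIntegral (fun θ φ => evalP n m b (tor θ) (tor φ) * conj (tor θ ^ j * tor φ ^ k)) =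
      (2 * π) ^ 2 * b j k := by
  have hterm : ∀ j' k', Continuous fun p : ℝ × ℝ =>
      b j' k' * ((tor p.1 ^ j' * conj (tor p.1 ^ j)) * (tor p.2 ^ k' * conj (tor p.2 ^ k))) := by
    have := continuous_tor
    fun_prop
  calc torusIntegral (fun θ φ => evalP n m b (tor θ) (tor φ) * conj (tor θ ^ j * tor φ ^ k))
      = torusIntegral (fun θ φ => ∑ j' ∈ range (n + 1), ∑ k' ∈ range (m + 1),
          b j' k' * ((tor θ ^ j' * conj (tor θ ^ j)) * (tor φ ^ k' * conj (tor φ ^ k)))) := by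
        congr 1; funext θ φ
        simp only [evalP, sum_mul, map_mul]
        exact sum_congr rfl fun _ _ => sum_congr rfl fun _ _ => by ring
    _ = ∑ j' ∈ range (n + 1), ∑ k' ∈ range (m + 1), b j' k' *
          ((∫ θ in (0 : ℝ)..2 * π, tor θ ^ j' * conj (tor θ ^ j)) *
            ∫ φ in (0 : ℝ)..2 * π, tor φ ^ k' * conj (tor φ ^ k)) := by
        rw [torusIntegral_finset_sum _ fun j' _ => continuous_finsetSum _ fun k' _ => hterm j' k']
        refine sum_congr rfl fun j' _ => ?_
        rw [torusIntegral_finset_sum _ fun k' _ => hterm j' k']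
        simp only [torusIntegral_const_mul, torusIntegral_prod_mul]
    _ = (2 * π) ^ 2 * b j k := by
        simp only [integral_tor_pow_mul_conj_tor_pow, ite_mul, mul_ite, zero_mul, mul_zero,
          sum_ite_eq', Finset.mem_range, Nat.lt_succ_iff.2 hj, Nat.lt_succ_iff.2 hk, if_true]
        ring

theorem evalP_eq_zero_of_eq_zero_on_torus {s : ℕ → ℕ → ℂ}
    (hs : ∀ θ ∈ Icc 0 (2 * π), ∀ φ ∈ Icc 0 (2 * π), evalP n m s (tor θ) (tor φ) = 0)
    (z w : ℂ) : evalP n m s z w = 0 := by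
  have hcoeff : ∀ j ∈ range (n + 1), ∀ k ∈ range (m + 1), s j k = 0 := by
    intro j hj k hk
    have hfourier := torusIntegral_evalP_mul_conj_monomial n m s
      (Nat.lt_succ_iff.1 (Finset.mem_range.1 hj)) (Nat.lt_succ_iff.1 (Finset.mem_range.1 hk))
    rw [torusIntegral_congr (G := fun _ _ => 0) fun θ hθ φ hφ => by simp [hs θ hθ φ hφ],
      torusIntegral_const, smul_zero, eq_comm, mul_eq_zero] at hfourier
    exact hfourier.resolve_left (by simp [Real.pi_ne_zero])
  exact sum_eq_zero fun j hj => sum_eq_zero fun k hk => by simp [hcoeff j hj k hk]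

theorem torusIntegral_normSq_evalP_mul {W : ℝ → ℝ → ℝ}
    (hW : Continuous fun p : ℝ × ℝ => W p.1 p.2) (s : ℕ → ℕ → ℂ) :
    torusIntegral (fun θ φ => ((normSq (evalP n m s (tor θ) (tor φ)) * W θ φ : ℝ) : ℂ)) =
      ∑ j ∈ range (n + 1), ∑ k ∈ range (m + 1), conj (s j k) *
        torusIntegral (fun θ φ =>
          evalP n m s (tor θ) (tor φ) * conj (tor θ ^ j * tor φ ^ k) * W θ φ) := by
  have hterm : ∀ j k, Continuous fun p : ℝ × ℝ => conj (s j k) *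
      (evalP n m s (tor p.1) (tor p.2) * conj (tor p.1 ^ j * tor p.2 ^ k) * W p.1 p.2) := by
    have := continuous_evalP_tor n m s
    have := continuous_tor
    intro j k; fun_prop
  have hexpand : ∀ θ φ, ((normSq (evalP n m s (tor θ) (tor φ)) * W θ φ : ℝ) : ℂ) =
      ∑ j ∈ range (n + 1), ∑ k ∈ range (m + 1), conj (s j k) *
        (evalP n m s (tor θ) (tor φ) * conj (tor θ ^ j * tor φ ^ k) * W θ φ) := by
    intro θ φ
    rw [ofReal_mul, normSq_eq_conj_mul_self, conj_evalP, sum_mul, sum_mul]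
    refine sum_congr rfl fun _ _ => ?_
    rw [sum_mul, sum_mul]
    exact sum_congr rfl fun _ _ => by ring
  simp only [hexpand]
  rw [torusIntegral_finset_sum _ fun j _ => continuous_finsetSum _ fun k _ => hterm j k]
  refine sum_congr rfl fun j _ => ?_
  rw [torusIntegral_finset_sum _ fun k _ => hterm j k]
  simp only [torusIntegral_const_mul]

theorem evalP_eq_zero_of_orthogonal {W : ℝ → ℝ → ℝ} (hW : Continuous fun p : ℝ × ℝ => W p.1 p.2)
    (hWpos : ∀ θ φ, 0 < W θ φ) {s : ℕ → ℕ → ℂ} (hs₀ : s 0 0 = 0)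
    (horth : ∀ j k, j ≤ n → k ≤ m → (j, k) ≠ (0, 0) →
      torusIntegral (fun θ φ =>
        evalP n m s (tor θ) (tor φ) * conj (tor θ ^ j * tor φ ^ k) * W θ φ) = 0)
    (z w : ℂ) : evalP n m s z w = 0 := by
  have hnormSq : torusIntegral (fun θ φ => normSq (evalP n m s (tor θ) (tor φ)) * W θ φ) = 0 := by
    rw [← ofReal_eq_zero, ← torusIntegral_ofReal, torusIntegral_normSq_evalP_mul n m hW]
    refine sum_eq_zero fun j hj => sum_eq_zero fun k hk => ?_
    by_cases hjk : (j, k) = (0, 0)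
    · simp only [Prod.mk.injEq] at hjk
      simp [hjk.1, hjk.2, hs₀]
    · rw [horth j k (Nat.lt_succ_iff.1 (Finset.mem_range.1 hj))
        (Nat.lt_succ_iff.1 (Finset.mem_range.1 hk)) hjk, mul_zero]
  have hcont := continuous_evalP_tor n m s
  refine evalP_eq_zero_of_eq_zero_on_torus n m (fun θ hθ φ hφ => ?_) z w
  have hvanish := eq_zero_of_torusIntegral_eq_zero (by fun_prop)
    (fun θ φ => mul_nonneg (normSq_nonneg _) (hWpos θ φ).le) hnormSq θ hθ φ hφ
  simpa [(hWpos θ φ).ne'] using hvanish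

end Polynomial

noncomputable def density (n m : ℕ) (a : ℕ → ℕ → ℂ) (c : ℝ) (θ φ : ℝ) : ℝ :=
  c ^ 2 / ‖evalP n m a (tor θ) (tor φ)‖ ^ 2

variable {n m : ℕ} {a : ℕ → ℕ → ℂ} {c : ℝ}

theorem continuous_density (hq : ∀ θ φ, evalP n m a (tor θ) (tor φ) ≠ 0) :
    Continuous fun p : ℝ × ℝ => density n m a c p.1 p.2 := by
  have := continuous_evalP_tor n m a
  unfold density
  fun_prop (disch := exact fun p => pow_ne_zero _ (norm_ne_zero_iff.2 (hq _ _)))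

theorem density_pos (hq : ∀ θ φ, evalP n m a (tor θ) (tor φ) ≠ 0) (hc : c ≠ 0) (θ φ : ℝ) :
    0 < density n m a c θ φ := by
  have := hq θ φ
  unfold density
  positivity

theorem orthCond_iff {b : ℕ → ℕ → ℂ} :
    OrthCond n m a b c ↔ ∀ j k, j ≤ n → k ≤ m → (j, k) ≠ (0, 0) →
      torusIntegral (fun θ φ => evalP n m b (tor θ) (tor φ) * conj (tor θ ^ j * tor φ ^ k) *
        density n m a c θ φ) = 0 := by
  simp [OrthCond, torusIntegral, density, Real.pi_ne_zero]

theorem posAtZero_iff {b : ℕ → ℕ → ℂ} : PosAtZero n m b ↔ 0 < evalP n m b 0 0 := by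
  simp [PosAtZero, Complex.pos_iff, eq_comm]

theorem orthCond_div
    (hstable : ∀ z w : ℂ, ‖z‖ ≤ 1 → ‖w‖ ≤ 1 → evalP n m a z w ≠ 0) :
    OrthCond n m a (fun j k => a j k / c) c := by
  rw [orthCond_iff]
  intro j k _ _ hjk
  have hq : ∀ z ∈ closedBall (0 : ℂ) 1, ∀ w ∈ closedBall (0 : ℂ) 1, evalP n m a z w ≠ 0 :=
    fun z hz w hw => hstable z w (mem_closedBall_zero_iff.1 hz) (mem_closedBall_zero_iff.1 hw)
  have hmonomial : (0 : ℂ) ^ j * 0 ^ k = 0 := by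
    have : j ≠ 0 ∨ k ≠ 0 := by
      contrapose! hjk
      simp [hjk]
    rcases this with h | h <;> simp [h]
  calc torusIntegral (fun θ φ => evalP n m (fun j k => a j k / c) (tor θ) (tor φ) *
        conj (tor θ ^ j * tor φ ^ k) * density n m a c θ φ)
      = torusIntegral (fun θ φ =>
          conj (c * (tor θ ^ j * tor φ ^ k / evalP n m a (tor θ) (tor φ)))) := by
        refine torusIntegral_congr fun θ _ φ _ => ?_
        have hq' := hq _ (tor_mem_closedBall θ) _ (tor_mem_closedBall φ)
        have : conj (evalP n m a (tor θ) (tor φ)) ≠ 0 := by simpa using hq'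
        simp only [evalP_div, density, ofReal_div, ofReal_pow, ← normSq_eq_norm_sq,
          normSq_eq_conj_mul_self, map_mul, map_div₀, conj_ofReal]
        field_simp
    _ = conj (c * ((2 * π) ^ 2 * (0 ^ j * 0 ^ k / evalP n m a 0 0))) := by
        rw [torusIntegral_conj, torusIntegral_const_mul,
          torusIntegral_of_differentiableOn (F := fun z w => z ^ j * w ^ k / evalP n m a z w)]
        · exact fun z hz => (by fun_prop : Differentiable ℂ fun w : ℂ => z ^ j * w ^ k)
            |>.differentiableOn.div (differentiable_evalP_right n m a z).differentiableOn
            (hq z hz)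
        · exact (by fun_prop : Differentiable ℂ fun z : ℂ => z ^ j * 0 ^ k)
            |>.differentiableOn.div (differentiable_evalP_left n m a 0).differentiableOn
            fun z hz => hq z hz 0 (by simp)
    _ = 0 := by simp [hmonomial]

theorem evalP_eq_mul_of_orthCond (hq : ∀ θ φ, evalP n m a (tor θ) (tor φ) ≠ 0) (hc : c ≠ 0)
    {b p : ℕ → ℕ → ℂ} (hb : OrthCond n m a b c) (hp : OrthCond n m a p c)
    (hp₀ : evalP n m p 0 0 ≠ 0) (z w : ℂ) :
    evalP n m b z w = evalP n m b 0 0 / evalP n m p 0 0 * evalP n m p z w := by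
  set t := evalP n m b 0 0 / evalP n m p 0 0
  rw [← sub_eq_zero, ← evalP_sub_mul]
  refine evalP_eq_zero_of_orthogonal n m (continuous_density hq) (density_pos hq hc) ?_ ?_ z w
  · rw [← evalP_zero_zero n m b, ← evalP_zero_zero n m p, div_mul_cancel₀ _ hp₀, sub_self]
  · intro j k hj hk hjk
    rw [orthCond_iff] at hb hp
    have hterm : ∀ f, Continuous fun x : ℝ × ℝ => evalP n m f (tor x.1) (tor x.2) *
        conj (tor x.1 ^ j * tor x.2 ^ k) * density n m a c x.1 x.2 := fun f => by
      have := continuous_evalP_tor n m f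
      have := continuous_density (c := c) hq
      have := continuous_tor
      fun_prop
    calc torusIntegral (fun θ φ => evalP n m (fun j k => b j k - t * p j k) (tor θ) (tor φ) *
          conj (tor θ ^ j * tor φ ^ k) * density n m a c θ φ)
        = torusIntegral (fun θ φ =>
            evalP n m b (tor θ) (tor φ) * conj (tor θ ^ j * tor φ ^ k) * density n m a c θ φ -
              t * (evalP n m p (tor θ) (tor φ) * conj (tor θ ^ j * tor φ ^ k) *
                density n m a c θ φ)) := by
          congr 1; funext θ φ
          rw [evalP_sub_mul]; ring
      _ = 0 := by
          rw [torusIntegral_sub (hterm b) (continuous_const.mul (hterm p)),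
            torusIntegral_const_mul, hb j k hj hk hjk, hp j k hj hk hjk, mul_zero, sub_zero]

theorem normOneCond_iff (hq : ∀ θ φ, evalP n m a (tor θ) (tor φ) ≠ 0) (hc : c ≠ 0)
    {b : ℕ → ℕ → ℂ} {t : ℂ}
    (hb : ∀ θ φ, evalP n m b (tor θ) (tor φ) = t * (evalP n m a (tor θ) (tor φ) / c)) :
    NormOneCond n m a b c ↔ ‖t‖ = 1 := by
  have hconst : ∀ θ φ, ‖evalP n m b (tor θ) (tor φ)‖ ^ 2 * density n m a c θ φ = ‖t‖ ^ 2 := by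
    intro θ φ
    have := norm_ne_zero_iff.2 (hq θ φ)
    rw [hb, density, norm_mul, norm_div, norm_real, Real.norm_eq_abs, mul_pow, div_pow, sq_abs]
    field_simp
  change 1 / (2 * π) ^ 2 * torusIntegral (fun θ φ =>
    ‖evalP n m b (tor θ) (tor φ)‖ ^ 2 * density n m a c θ φ) = 1 ↔ _
  rw [torusIntegral_congr fun θ _ φ _ => hconst θ φ, torusIntegral_const, smul_eq_mul,
    one_div, inv_mul_cancel_left₀ (by positivity),
    pow_eq_one_iff_of_nonneg (norm_nonneg t) two_ne_zero]

end BernsteinSzego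

theorem stmt_19_general (n m : ℕ) (a : ℕ → ℕ → ℂ)
    (hstable : ∀ z w : ℂ, ‖z‖ ≤ 1 → ‖w‖ ≤ 1 → evalP n m a z w ≠ 0)
    (hpos : PosAtZero n m a)
    (c : ℝ) (hc : 0 < c) :
    (OrthCond n m a (fun j k => a j k / (c : ℂ)) c ∧
      PosAtZero n m (fun j k => a j k / (c : ℂ)) ∧
      NormOneCond n m a (fun j k => a j k / (c : ℂ)) c) ∧
    (∀ b : ℕ → ℕ → ℂ, OrthCond n m a b c → PosAtZero n m b → NormOneCond n m a b c →
      ∀ z w : ℂ, evalP n m b z w = evalP n m a z w / (c : ℂ)) := by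
  open BernsteinSzego in
  have hq : ∀ θ φ, evalP n m a (tor θ) (tor φ) ≠ 0 :=
    fun θ φ => hstable _ _ (norm_tor θ).le (norm_tor φ).le
  have horth := orthCond_div (c := c) hstable
  have hpos_div : 0 < evalP n m (fun j k => a j k / (c : ℂ)) 0 0 := by
    rw [evalP_div]
    exact div_pos (posAtZero_iff.1 hpos) (by exact_mod_cast hc)
  refine ⟨⟨horth, posAtZero_iff.2 hpos_div, (normOneCond_iff hq hc.ne' fun θ φ => by
    rw [evalP_div, one_mul]).2 norm_one⟩, fun b hb hb₀ hb_norm z w => ?_⟩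
  have hbt := evalP_eq_mul_of_orthCond hq hc.ne' hb horth hpos_div.ne'
  set t := evalP n m b 0 0 / evalP n m (fun j k => a j k / (c : ℂ)) 0 0
  have ht : 0 < t := div_pos (posAtZero_iff.1 hb₀) hpos_div
  have ht_norm : ‖t‖ = 1 := (normOneCond_iff hq hc.ne' fun θ φ => by
    rw [hbt, evalP_div]).1 hb_norm
  rw [hbt, eq_coe_norm_of_nonneg ht.le, ht_norm, ofReal_one, one_mul, evalP_div]

/-- For stable `q` with `q(0,0) > 0` and Bernstein–Szegő measure `μ` with normalizing
constant `c`, the polynomial `q/c` is the unique `p` of bidegree `(n,m)` with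
`p ⊥_μ z^j w^k` for `(j,k) ≠ (0,0)`, `p(0,0) > 0`, and `‖p‖_μ = 1`. -/
theorem stmt_19 (n m : ℕ) (a : ℕ → ℕ → ℂ)
    (hstable : ∀ z w : ℂ, ‖z‖ ≤ 1 → ‖w‖ ≤ 1 → evalP n m a z w ≠ 0)
    (hpos : PosAtZero n m a)
    (c : ℝ) (hc : 0 < c)
    (hprob : (1 / (2 * Real.pi) ^ 2) *
        (∫ θ in (0 : ℝ)..(2 * Real.pi), ∫ φ in (0 : ℝ)..(2 * Real.pi),
          c ^ 2 / ‖evalP n m a (tor θ) (tor φ)‖ ^ 2) = 1) :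
    (OrthCond n m a (fun j k => a j k / (c : ℂ)) c ∧
      PosAtZero n m (fun j k => a j k / (c : ℂ)) ∧
      NormOneCond n m a (fun j k => a j k / (c : ℂ)) c) ∧
    (∀ b : ℕ → ℕ → ℂ, OrthCond n m a b c → PosAtZero n m b → NormOneCond n m a b c →
      ∀ z w : ℂ, evalP n m b z w = evalP n m a z w / (c : ℂ)) :=
  stmt_19_general n m a hstable hpos c hc
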